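/- Let u be a minimal lace diagram with rank conditions r for (e_0,...,e_n). Then for every minimal lace diagram w with rank conditions r and w different from u, phi_u(S(w)) = 0; consequently phi_u(Q_r) = phi_u(S(u)), and this is a nonzero polynomial in the strand variables, homogeneous of degree d(r). -/

import Mathlib

open MvPolynomial

/-! Common setup.  Dots in columns, positions in permutations, and variable
indices are all 0-indexed: dot `q` (0-indexed) of column `i` is dot `q+1`
(1-indexed) in the paper, the variable `(i, j) : ℕ × ℕ` is the Chern root
`x^i_{j+1}`, and in the Schubert variable type `ℕ ⊕ ℕ`, `Sum.inl a` is
`x_{a+1}` and `Sum.inr b` is `y_{b+1}`. -/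

/-- Coxeter length = number of inversions of a (finitely supported) permutation of ℕ. -/
noncomputable def ell (w : Equiv.Perm ℕ) : ℕ :=
  {p : ℕ × ℕ | p.1 < p.2 ∧ w p.2 < w p.1}.ncard

/-- A finitely supported permutation of ℕ. -/
def FinSupp (w : Equiv.Perm ℕ) : Prop := {x | w x ≠ x}.Finite

/-- A lace diagram for the dimension vector `e 0, …, e n`, encoded as a sequence
`w 1, …, w n` of finitely supported permutations of ℕ (normalized so that
`w i = 1` outside `1 ≤ i ≤ n`): all descent positions of `w i` are `< e i` and
all descent positions of `(w i)⁻¹` are `< e (i-1)` (0-indexed positions). -/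
def IsLace (n : ℕ) (e : ℕ → ℕ) (w : ℕ → Equiv.Perm ℕ) : Prop :=
  (∀ i, i = 0 ∨ n < i → w i = 1) ∧
  ∀ i, 1 ≤ i → i ≤ n → FinSupp (w i) ∧
    (∀ k, w i (k + 1) < w i k → k < e i) ∧
    (∀ k, (w i)⁻¹ (k + 1) < (w i)⁻¹ k → k < e (i - 1))

/-- `chain w i k p = (w k)⁻¹ (⋯ ((w (i+1))⁻¹ p))` for `k ≥ i`, and `p` for `k ≤ i`. -/
def chain (w : ℕ → Equiv.Perm ℕ) (i : ℕ) : ℕ → ℕ → ℕ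
  | 0, p => p
  | k + 1, p => if k + 1 ≤ i then p else (w (k + 1))⁻¹ (chain w i k p)

/-- The rank conditions of a lace diagram: `rank e w i j` is the number of dots
`p < e i` of column `i` whose strand continues through column `j`. -/
noncomputable def rank (e : ℕ → ℕ) (w : ℕ → Equiv.Perm ℕ) (i j : ℕ) : ℕ :=
  {p : ℕ | p < e i ∧ ∀ k, i < k → k ≤ j → chain w i k p < e k}.ncard

/-- The lace diagram `w` has rank conditions `r` (for `0 ≤ i ≤ j ≤ n`). -/
def RankEq (n : ℕ) (e : ℕ → ℕ) (w : ℕ → Equiv.Perm ℕ) (r : ℕ → ℕ → ℕ) : Prop :=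
  ∀ i j, i ≤ j → j ≤ n → rank e w i j = r i j

/-- The length of a lace diagram. -/
noncomputable def diagLength (n : ℕ) (w : ℕ → Equiv.Perm ℕ) : ℕ :=
  ∑ i ∈ Finset.Icc 1 n, ell (w i)

/-- The expected codimension `d(r)`. -/
def codim (n : ℕ) (r : ℕ → ℕ → ℕ) : ℕ :=
  ∑ i ∈ Finset.range (n + 1), ∑ j ∈ Finset.range (n + 1),
    if i < j then (r i (j - 1) - r i j) * (r (i + 1) j - r i j) else 0

/-- A minimal lace diagram: its length equals the expected codimension of its
rank conditions. -/
def IsMinimal (n : ℕ) (e : ℕ → ℕ) (w : ℕ → Equiv.Perm ℕ) : Prop :=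
  IsLace n e w ∧ diagLength n w = codim n (rank e w)

/-- The longest element of `S m` (0-indexed), as a permutation of ℕ. -/
def longest (m : ℕ) : Equiv.Perm ℕ where
  toFun i := if i < m then m - 1 - i else i
  invFun i := if i < m then m - 1 - i else i
  left_inv i := by dsimp only; split_ifs <;> omega
  right_inv i := by dsimp only; split_ifs <;> omega

/-- Interchanging the x-variables `x (i+1)` and `x (i+2)` (0-indexed: `inl i`
and `inl (i+1)`). -/
noncomputable def sX (i : ℕ) (f : MvPolynomial (ℕ ⊕ ℕ) ℤ) : MvPolynomial (ℕ ⊕ ℕ) ℤ :=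
  rename (Sum.map (Equiv.swap i (i + 1)) id) f

/-- `S` is the family of double Schubert polynomials `S w = 𝔖_w(x; y)`:
it takes the prescribed product value on each longest element, it satisfies the
divided difference recursion `(x i - x (i+1)) * S (w * s i) = S w - (S w)^{s i}`
when `w` has a descent at `i` and `(S w)^{s i} = S w` otherwise, and only the
variables up to the last descents of `w` and `w⁻¹` occur in `S w`. -/
def IsSchubertFamily (S : Equiv.Perm ℕ → MvPolynomial (ℕ ⊕ ℕ) ℤ) : Prop :=
  (∀ m : ℕ, S (longest m) =
      ∏ i ∈ Finset.range m, ∏ j ∈ Finset.range m,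
        if i + j + 2 ≤ m then X (Sum.inl i) - X (Sum.inr j) else 1) ∧
  (∀ w : Equiv.Perm ℕ, FinSupp w → ∀ i : ℕ,
    (w (i + 1) < w i →
      (X (Sum.inl i) - X (Sum.inl (i + 1))) * S (w * Equiv.swap i (i + 1)) =
        S w - sX i (S w)) ∧
    (w i < w (i + 1) → sX i (S w) = S w)) ∧
  (∀ w : Equiv.Perm ℕ, FinSupp w → ∀ k l : ℕ,
    (∀ t, k ≤ t → ¬w (t + 1) < w t) → (∀ t, l ≤ t → ¬w⁻¹ (t + 1) < w⁻¹ t) →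
    ∀ v ∈ (S w).vars, (∃ a < k, v = Sum.inl a) ∨ (∃ b < l, v = Sum.inr b))

/-- The product `S(w) = 𝔖_{w 1}(x^1;x^0) ⋯ 𝔖_{w n}(x^n;x^{n-1})`, in the
variables `(i, j) = x^i_{j+1}`. -/
noncomputable def Sprod (n : ℕ) (S : Equiv.Perm ℕ → MvPolynomial (ℕ ⊕ ℕ) ℤ)
    (w : ℕ → Equiv.Perm ℕ) : MvPolynomial (ℕ × ℕ) ℤ :=
  ∏ i ∈ Finset.Icc 1 n,
    rename (Sum.elim (fun a => (i, a)) (fun b => (i - 1, b))) (S (w i))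

/-- The component-formula polynomial `Q_r`: the sum of `Sprod n S w` over all
minimal lace diagrams `w` with rank conditions `r`. -/
noncomputable def Qpoly (n : ℕ) (e : ℕ → ℕ) (r : ℕ → ℕ → ℕ)
    (S : Equiv.Perm ℕ → MvPolynomial (ℕ ⊕ ℕ) ℤ) : MvPolynomial (ℕ × ℕ) ℤ :=
  ∑ᶠ (w : ℕ → Equiv.Perm ℕ) (_ : IsMinimal n e w ∧ RankEq n e w r), Sprod n S w

/-- The shifted permutation `1^k × w`: fixes `0, …, k-1` (0-indexed) and sends
`k + j` to `k + w j`. -/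
def shiftPerm (k : ℕ) (w : Equiv.Perm ℕ) : Equiv.Perm ℕ where
  toFun j := if j < k then j else w (j - k) + k
  invFun j := if j < k then j else w⁻¹ (j - k) + k
  left_inv j := by
    dsimp only
    by_cases h : j < k
    · simp [h]
    · have h1 : ¬ w (j - k) + k < k := by omega
      simp only [if_neg h, if_neg h1, Nat.add_sub_cancel, Equiv.Perm.inv_def, Equiv.symm_apply_apply]
      omega
  right_inv j := by
    dsimp only
    by_cases h : j < k
    · simp [h]
    · have h1 : ¬ w⁻¹ (j - k) + k < k := by omega
      simp only [if_neg h, if_neg h1, Nat.add_sub_cancel, Equiv.Perm.inv_def, Equiv.apply_symm_apply]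
      split_ifs <;> omega

/-- The lace diagram `(1^k × w 1, …, 1^k × w n)`. -/
def shiftDiag (k : ℕ) (w : ℕ → Equiv.Perm ℕ) : ℕ → Equiv.Perm ℕ :=
  fun i => shiftPerm k (w i)

/-- The transformation of lace diagrams, allowed at `(i, j)` (0-indexed `j`,
so `j + 1 < e i`) when exactly one of the two descent conditions holds; it
replaces `w i` by `w i * s j` and `w (i+1)` by `s j * w (i+1)`. -/
def TransStep (n : ℕ) (e : ℕ → ℕ) (w w' : ℕ → Equiv.Perm ℕ) : Prop :=
  IsLace n e w ∧ ∃ i j, 1 ≤ i ∧ i + 1 ≤ n ∧ j + 1 < e i ∧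
    Xor' (w i (j + 1) < w i j) ((w (i + 1))⁻¹ (j + 1) < (w (i + 1))⁻¹ j) ∧
    w' = Function.update (Function.update w i (w i * Equiv.swap j (j + 1))) (i + 1)
          (Equiv.swap j (j + 1) * w (i + 1))

/-- The column where the strand through dot `q` of column `c` starts. -/
def startCol (e : ℕ → ℕ) (w : ℕ → Equiv.Perm ℕ) : ℕ → ℕ → ℕ
  | 0, _ => 0
  | c + 1, q => if w (c + 1) q < e c then startCol e w c (w (c + 1) q) else c + 1

/-- The starting dot `(column, position)` of the strand through dot `q` of column `c`. -/
def startDot (e : ℕ → ℕ) (w : ℕ → Equiv.Perm ℕ) : ℕ → ℕ → ℕ × ℕ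
  | 0, q => (0, q)
  | c + 1, q => if w (c + 1) q < e c then startDot e w c (w (c + 1) q) else (c + 1, q)

def endColAux (e : ℕ → ℕ) (w : ℕ → Equiv.Perm ℕ) : ℕ → ℕ → ℕ → ℕ
  | 0, c, _ => c
  | f + 1, c, q =>
      if (w (c + 1))⁻¹ q < e (c + 1) then endColAux e w f (c + 1) ((w (c + 1))⁻¹ q) else c

/-- The column where the strand through dot `q` of column `c` terminates. -/
def endCol (n : ℕ) (e : ℕ → ℕ) (w : ℕ → Equiv.Perm ℕ) (c q : ℕ) : ℕ :=
  endColAux e w (n - c) c q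

/-- `w` is the left-most lace diagram (for its rank conditions): it is a lace
diagram such that in every column the strands are sorted from top to bottom by
starting column (ascending) and then by terminating column (descending), exactly
as produced by the construction which adds, for `i = 0, …, n` and `j = n, …, i`,
all strands from column `i` to column `j` to the bottom of the diagram; and
strands with the same start and end do not cross. -/
def IsLeftmost (n : ℕ) (e : ℕ → ℕ) (w : ℕ → Equiv.Perm ℕ) : Prop :=
  IsLace n e w ∧
  (∀ c, c ≤ n → ∀ q q', q < q' → q' < e c →
    startCol e w c q < startCol e w c q' ∨
      (startCol e w c q = startCol e w c q' ∧ endCol n e w c q' ≤ endCol n e w c q)) ∧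
  (∀ c, 1 ≤ c → c ≤ n → ∀ q q', q < q' → q' < e c →
    startCol e w c q = startCol e w c q' → endCol n e w c q = endCol n e w c q' →
    w c q < w c q')

/-- The substitution homomorphism `φ_u` of a lace diagram `u`: it sends the
variable `x^i_j` to the variable `b_S` of the strand `S` of `u` through dot
`(i, j)`, where the strand variables are realized as the variables indexed by
the starting dots of strands. -/
noncomputable def phiMap (e : ℕ → ℕ) (u : ℕ → Equiv.Perm ℕ) :
    MvPolynomial (ℕ × ℕ) ℤ →ₐ[ℤ] MvPolynomial (ℕ × ℕ) ℤ :=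
  rename fun p => startDot e u p.1 p.2

/-- The product of the simple transpositions `s (i+1)` (1-indexed) for `i` in `l`. -/
def wordProd (l : List ℕ) : Equiv.Perm ℕ := (l.map fun i => Equiv.swap i (i + 1)).prod

/-- A reduced word for a finitely supported permutation of ℕ. -/
def IsReducedWord (u : Equiv.Perm ℕ) (l : List ℕ) : Prop :=
  wordProd l = u ∧ l.length = ell u

/-- Bruhat order: some reduced word for `u` contains a subword which is a
reduced word for `w`. -/
def BruhatLE (w u : Equiv.Perm ℕ) : Prop :=
  ∃ l l', IsReducedWord u l ∧ IsReducedWord w l' ∧ l'.Sublist l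


/-! Specializing `x_i ↦ y_{v(i)}` makes double Schubert polynomials triangular: `𝔖_w(y_v; y)`
vanishes when `ℓ(v) ≤ ℓ(w)` and `v ≠ w`, while `𝔖_w(y_w; y) ≠ 0`. For the longest element of
`S_m` the product `∏ (y_{v(i)} - y_j)` vanishes unless `v(i) ≥ m - 1 - i` for all `i < m`, and such
a `v` is longer than `w₀` unless it is `w₀`. The property descends along the recursion, which
specializes to `(y_{v(i)} - y_{v(i+1)}) 𝔖_{w s_i}(y_v) = 𝔖_w(y_v) - 𝔖_w(y_{v s_i})`.

Under `φ_u` the factor `𝔖_{w_i}(x^i; x^{i-1})` of `S(w)` becomes, up to an injective renaming of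
the strand variables, `𝔖_{w_i}(y_{u_i}; y)`. So `φ_u(S(w)) ≠ 0` forces `ℓ(w_i) ≤ ℓ(u_i)` for all
`i`; minimal diagrams with the same rank conditions have the same length `d(r)`, so these are
equalities, and then `w_i = u_i`. -/

open Equiv Finset

def inversions (w : Perm ℕ) : Set (ℕ × ℕ) := {p | p.1 < p.2 ∧ w p.2 < w p.1}

lemma ell_eq_ncard_inversions (w : Perm ℕ) : ell w = (inversions w).ncard := rfl

def FixedFrom (w : Perm ℕ) (N : ℕ) : Prop := ∀ k, N ≤ k → w k = k

def ltPairs (N : ℕ) : Finset (ℕ × ℕ) := (range N ×ˢ range N).filter fun p => p.1 < p.2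

lemma mem_ltPairs {N : ℕ} {p : ℕ × ℕ} : p ∈ ltPairs N ↔ p.1 < p.2 ∧ p.2 < N := by
  simp only [ltPairs, mem_filter, mem_product, mem_range]
  omega

lemma card_ltPairs_succ (m : ℕ) : #(ltPairs (m + 1)) = #(ltPairs m) + m := by
  have hsplit : ltPairs (m + 1) = ltPairs m ∪ range m ×ˢ {m} := by
    ext ⟨a, b⟩
    simp only [mem_ltPairs, mem_union, mem_product, mem_range, mem_singleton]
    omega
  have hdisj : Disjoint (ltPairs m) (range m ×ˢ {m}) := by
    rw [disjoint_left]
    rintro ⟨a, b⟩ h1 h2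
    simp only [mem_ltPairs, mem_product, mem_range, mem_singleton] at h1 h2
    omega
  rw [hsplit, card_union_of_disjoint hdisj, card_product, card_range, card_singleton, mul_one]

lemma FinSupp.exists_fixedFrom {w : Perm ℕ} (h : FinSupp w) : ∃ N, FixedFrom w N := by
  obtain ⟨N, hN⟩ := h.bddAbove
  exact ⟨N + 1, fun k hk => by_contra fun hne => absurd (hN hne) (by omega)⟩

namespace FixedFrom

variable {w : Perm ℕ} {N : ℕ}

lemma finSupp (h : FixedFrom w N) : FinSupp w :=
  (Set.finite_Iio N).subset fun x hx => by
    by_contra hc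
    exact hx (h x (not_lt.mp hc))

lemma apply_lt (h : FixedFrom w N) {p : ℕ} (hp : p < N) : w p < N := by
  by_contra hc
  have := w.injective (h (w p) (not_lt.mp hc))
  omega

lemma inversions_subset (h : FixedFrom w N) : inversions w ⊆ ltPairs N := by
  rintro ⟨p, q⟩ ⟨hpq, hinv⟩
  simp only at hpq hinv
  refine mem_ltPairs.mpr ⟨hpq, not_le.mp fun hq => ?_⟩
  rw [h q hq] at hinv
  by_cases hp : p < N
  · have := h.apply_lt hp
    omega
  · rw [h p (not_lt.mp hp)] at hinv
    omega

lemma ell_le (h : FixedFrom w N) : ell w ≤ #(ltPairs N) := by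
  rw [ell_eq_ncard_inversions, ← Set.ncard_coe_finset]
  exact Set.ncard_le_ncard h.inversions_subset (Finset.finite_toSet _)

lemma mul_swap (h : FixedFrom w N) {i : ℕ} (hi : i + 1 < N) :
    FixedFrom (w * swap i (i + 1)) N := by
  intro k hk
  rw [Perm.mul_apply, swap_apply_of_ne_of_ne (by omega) (by omega), h k hk]

end FixedFrom

lemma FinSupp.inversions_finite {w : Perm ℕ} (h : FinSupp w) : (inversions w).Finite := by
  obtain ⟨N, hN⟩ := h.exists_fixedFrom
  exact (Finset.finite_toSet _).subset hN.inversions_subset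

lemma FinSupp.mul_swap {w : Perm ℕ} (h : FinSupp w) (i : ℕ) :
    FinSupp (w * swap i (i + 1)) := by
  refine (h.union (Set.toFinite {i, i + 1})).subset fun x hx => ?_
  by_cases hx' : x = i ∨ x = i + 1
  · exact Or.inr hx'
  · obtain ⟨hxi, hxi1⟩ := not_or.mp hx'
    left
    simpa [Perm.mul_apply, swap_apply_of_ne_of_ne hxi hxi1] using hx

lemma swap_succ_lt_swap_succ_iff {i a b : ℕ} (h : ¬(a = i ∧ b = i + 1))
    (h' : ¬(a = i + 1 ∧ b = i)) : swap i (i + 1) a < swap i (i + 1) b ↔ a < b := by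
  simp only [swap_apply_def]
  split_ifs <;> omega

lemma inversions_mul_swap_of_lt {w : Perm ℕ} {i : ℕ} (h : w i < w (i + 1)) :
    inversions (w * swap i (i + 1)) =
      insert (i, i + 1) (prodCongr (swap i (i + 1)) (swap i (i + 1)) '' inversions w) := by
  rw [image_eq_preimage_symm, prodCongr_symm, symm_swap]
  ext ⟨a, b⟩
  simp only [inversions, Set.mem_insert_iff, Set.mem_preimage, Set.mem_ofPred_eq, Prod.mk.injEq,
    prodCongr_apply, Prod.map_apply, Perm.mul_apply]
  by_cases h1 : a = i ∧ b = i + 1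
  · obtain ⟨rfl, rfl⟩ := h1
    simp [h]
  by_cases h2 : a = i + 1 ∧ b = i
  · obtain ⟨rfl, rfl⟩ := h2
    simp [h.not_gt]
  rw [swap_succ_lt_swap_succ_iff h1 h2]
  tauto

lemma ell_mul_swap_of_lt {w : Perm ℕ} (hw : FinSupp w) {i : ℕ} (h : w i < w (i + 1)) :
    ell (w * swap i (i + 1)) = ell w + 1 := by
  have hnotin : (i, i + 1) ∉ prodCongr (swap i (i + 1)) (swap i (i + 1)) '' inversions w := by
    rw [image_eq_preimage_symm]
    simp [inversions]
  rw [ell_eq_ncard_inversions, inversions_mul_swap_of_lt h,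
    Set.ncard_insert_of_notMem hnotin (hw.inversions_finite.image _),
    Set.ncard_image_of_injective _ (Equiv.injective _), ell_eq_ncard_inversions]

lemma ell_mul_swap_of_gt {w : Perm ℕ} (hw : FinSupp w) {i : ℕ} (h : w (i + 1) < w i) :
    ell w = ell (w * swap i (i + 1)) + 1 := by
  have hasc : (w * swap i (i + 1)) i < (w * swap i (i + 1)) (i + 1) := by simpa using h
  simpa [mul_assoc] using ell_mul_swap_of_lt (hw.mul_swap i) hasc

lemma ell_mul_swap_le {w : Perm ℕ} (hw : FinSupp w) (i : ℕ) :
    ell (w * swap i (i + 1)) ≤ ell w + 1 := by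
  rcases lt_or_gt_of_ne (w.injective.ne (show i ≠ i + 1 by omega)) with h | h
  · exact (ell_mul_swap_of_lt hw h).le
  · have := ell_mul_swap_of_gt hw h
    omega

lemma longest_apply (m k : ℕ) : longest m k = if k < m then m - 1 - k else k := rfl

lemma ell_longest (m : ℕ) : ell (longest m) = #(ltPairs m) := by
  have : inversions (longest m) = ltPairs m := by
    ext ⟨p, q⟩
    simp only [inversions, Set.mem_ofPred_eq, longest_apply, Finset.mem_coe, mem_ltPairs]
    constructor
    · rintro ⟨h1, h2⟩
      split_ifs at h2 <;> omega
    · rintro ⟨h1, h2⟩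
      rw [if_pos (by omega), if_pos (by omega)]
      omega
  rw [ell_eq_ncard_inversions, this, Set.ncard_coe_finset]

lemma sum_ite_add_add_two_le (m : ℕ) :
    ∑ i ∈ range m, ∑ j ∈ range m, (if i + j + 2 ≤ m then 1 else 0) = #(ltPairs m) := by
  rw [← sum_product' (f := fun i j => if i + j + 2 ≤ m then 1 else 0), ← card_filter]
  refine card_nbij' (fun p => (p.1, m - 1 - p.2)) (fun p => (p.1, m - 1 - p.2)) ?_ ?_ ?_ ?_ <;>
    rintro ⟨a, b⟩ h <;> simp only [coe_filter, mem_product, mem_range, Set.mem_ofPred_eq,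
      mem_coe, mem_ltPairs, Prod.mk.injEq, true_and] at h ⊢ <;> omega

lemma FixedFrom.eq_longest {w : Perm ℕ} {N : ℕ} (hw : FixedFrom w N)
    (hdec : ∀ i, i + 1 < N → w (i + 1) < w i) : w = longest N := by
  have upper : ∀ i, i < N → w i + i + 1 ≤ N := by
    intro i
    induction i with
    | zero =>
      intro h
      have := hw.apply_lt h
      omega
    | succ i ih =>
      intro hi
      have := hdec i hi
      have := ih (by omega)
      omega
  have lower : ∀ j i, N - i = j + 1 → N - 1 - i ≤ w i := by
    intro j
    induction j with
    | zero => omega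
    | succ j ih =>
      intro i hj
      have := hdec i (by omega)
      have := ih (i + 1) (by omega)
      omega
  ext k
  rw [longest_apply]
  split_ifs with hk
  · have := upper k hk
    have := lower (N - k - 1) k (by omega)
    omega
  · exact hw k (not_lt.mp hk)

lemma FixedFrom.exists_lt_succ {w : Perm ℕ} {N : ℕ} (hw : FixedFrom w N) (hne : w ≠ longest N) :
    ∃ i, i + 1 < N ∧ w i < w (i + 1) := by
  by_contra! h
  refine hne (hw.eq_longest fun i hi => (h i hi).lt_of_ne ?_)
  exact w.injective.ne (by omega)

theorem FixedFrom.induction_longest {N : ℕ} {P : Perm ℕ → Prop} (hlong : P (longest N))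
    (hstep : ∀ w i, FixedFrom w N → i + 1 < N → w i < w (i + 1) →
      P (w * swap i (i + 1)) → P w)
    {w : Perm ℕ} (hw : FixedFrom w N) : P w := by
  induction hk : #(ltPairs N) - ell w using Nat.strong_induction_on generalizing w with
  | _ k ih =>
    by_cases hl : w = longest N
    · exact hl ▸ hlong
    obtain ⟨i, hi, hasc⟩ := hw.exists_lt_succ hl
    refine hstep w i hw hi hasc (ih _ ?_ (hw.mul_swap hi) rfl)
    have := (hw.mul_swap hi).ell_le
    have := ell_mul_swap_of_lt hw.finSupp hasc
    omega

def succAbove (k i : ℕ) : ℕ := if i < k then i else i + 1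

lemma succAbove_ne (k i : ℕ) : succAbove k i ≠ k := by
  unfold succAbove; split_ifs <;> omega

lemma succAbove_lt_succAbove_iff {k a b : ℕ} : succAbove k a < succAbove k b ↔ a < b := by
  unfold succAbove; split_ifs <;> omega

lemma succAbove_injective (k : ℕ) : Function.Injective (succAbove k) := fun a b h => by
  unfold succAbove at h; split_ifs at h <;> omega

lemma exists_succAbove_eq {k j : ℕ} (hj : j ≠ k) : ∃ i, succAbove k i = j :=
  ⟨if j < k then j else j - 1, by unfold succAbove; split_ifs <;> omega⟩

/-- The permutation obtained from `v` by deleting the position `k` and the value `0 = v k`. -/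
def eraseZero (v : Perm ℕ) (k : ℕ) (hk : v k = 0) : Perm ℕ where
  toFun i := v (succAbove k i) - 1
  invFun j := if v.symm (j + 1) < k then v.symm (j + 1) else v.symm (j + 1) - 1
  left_inv i := by
    have hne : v (succAbove k i) ≠ 0 := fun h0 => succAbove_ne k i (v.injective (h0.trans hk.symm))
    simp only
    rw [Nat.sub_add_cancel (Nat.pos_of_ne_zero hne), symm_apply_apply]
    unfold succAbove
    split_ifs <;> omega
  right_inv j := by
    have hne : v.symm (j + 1) ≠ k := fun h => by
      have := congrArg v h
      rw [apply_symm_apply, hk] at this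
      omega
    have hs : succAbove k (if v.symm (j + 1) < k then v.symm (j + 1) else v.symm (j + 1) - 1) =
        v.symm (j + 1) := by
      unfold succAbove
      split_ifs <;> omega
    simp only
    rw [hs, apply_symm_apply, Nat.add_sub_cancel]

section

variable {v : Perm ℕ} {k : ℕ}

lemma apply_succAbove_eq_eraseZero (hk : v k = 0) (i : ℕ) :
    v (succAbove k i) = eraseZero v k hk i + 1 := by
  have hne : v (succAbove k i) ≠ 0 := fun h0 => succAbove_ne k i (v.injective (h0.trans hk.symm))
  change v (succAbove k i) = v (succAbove k i) - 1 + 1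
  omega

lemma inversions_eq_union_eraseZero (hk : v k = 0) :
    inversions v = (fun p => (p, k)) '' Set.Iio k ∪
      Prod.map (succAbove k) (succAbove k) '' inversions (eraseZero v k hk) := by
  have hv := apply_succAbove_eq_eraseZero hk
  ext ⟨a, b⟩
  simp only [inversions, Set.mem_union, Set.mem_image, Set.mem_Iio, Set.mem_ofPred_eq,
    Prod.map, Prod.mk.injEq, Prod.exists]
  constructor
  · rintro ⟨hab, hinv⟩
    by_cases hb : b = k
    · exact Or.inl ⟨a, by omega, rfl, hb.symm⟩
    have ha : a ≠ k := by rintro rfl; omega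
    obtain ⟨a', rfl⟩ := exists_succAbove_eq ha
    obtain ⟨b', rfl⟩ := exists_succAbove_eq hb
    rw [hv, hv] at hinv
    exact Or.inr ⟨a', b', ⟨succAbove_lt_succAbove_iff.mp hab, by omega⟩, rfl, rfl⟩
  · rintro (⟨p, hp, rfl, rfl⟩ | ⟨a', b', ⟨hab, hinv⟩, rfl, rfl⟩)
    · refine ⟨hp, ?_⟩
      rw [hk]
      exact Nat.pos_of_ne_zero fun h0 => (Nat.ne_of_lt hp) (v.injective (h0.trans hk.symm))
    · rw [hv, hv]
      exact ⟨succAbove_lt_succAbove_iff.mpr hab, by omega⟩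

lemma ell_eq_ell_eraseZero_add (hv : FinSupp v) (hk : v k = 0) :
    ell v = ell (eraseZero v k hk) + k := by
  have hfin : (inversions v).Finite := hv.inversions_finite
  have hdisj : Disjoint ((fun p => (p, k)) '' Set.Iio k)
      (Prod.map (succAbove k) (succAbove k) '' inversions (eraseZero v k hk)) := by
    rw [Set.disjoint_left]
    rintro _ ⟨p, -, rfl⟩ ⟨⟨a, b⟩, -, h⟩
    exact succAbove_ne k b (Prod.ext_iff.mp h).2
  have hinj : Function.Injective (Prod.map (succAbove k) (succAbove k)) :=
    (succAbove_injective k).prodMap (succAbove_injective k)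
  rw [inversions_eq_union_eraseZero hk] at hfin
  rw [ell_eq_ncard_inversions, inversions_eq_union_eraseZero hk,
    Set.ncard_union_eq hdisj (hfin.subset Set.subset_union_left)
      (hfin.subset Set.subset_union_right),
    Set.ncard_image_of_injective _ hinj,
    Set.ncard_image_of_injective _ fun a b h => (Prod.ext_iff.mp h).1,
    ← ell_eq_ncard_inversions, ← coe_range, Set.ncard_coe_finset, card_range, add_comm]

lemma FixedFrom.eraseZero {N : ℕ} (hN : FixedFrom v N) (hk : v k = 0) :
    FixedFrom (eraseZero v k hk) (N + k) := fun i hi => by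
  have := apply_succAbove_eq_eraseZero hk i
  rw [show succAbove k i = i + 1 by unfold succAbove; rw [if_neg (by omega)],
    hN (i + 1) (by omega)] at this
  omega

lemma FinSupp.eraseZero (hv : FinSupp v) (hk : v k = 0) : FinSupp (eraseZero v k hk) :=
  let ⟨_, hN⟩ := hv.exists_fixedFrom
  (hN.eraseZero hk).finSupp

lemma le_apply_add_of_lt_succ {E : ℕ} (hmono : ∀ t, E ≤ t → v t < v (t + 1)) {a : ℕ}
    (ha : E ≤ a) (d : ℕ) : v a + d ≤ v (a + d) := by
  induction d with
  | zero => rfl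
  | succ d ih =>
    have := hmono (a + d) (by omega)
    rw [← add_assoc, ← add_assoc]
    omega

lemma FixedFrom.apply_le_self_of_lt_succ {N E : ℕ} (hN : FixedFrom v N)
    (hmono : ∀ t, E ≤ t → v t < v (t + 1)) {j : ℕ} (hj : E ≤ j) : v j ≤ j := by
  by_cases hjN : N ≤ j
  · rw [hN j hjN]
  · have := le_apply_add_of_lt_succ hmono hj (N - j)
    rw [Nat.add_sub_cancel' (by omega), hN N le_rfl] at this
    omega

lemma lt_succ_of_inversions_eq_empty (h : inversions v = ∅) (t : ℕ) : v t < v (t + 1) := by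
  refine (le_of_not_gt fun hlt => ?_).lt_of_ne (v.injective.ne (by omega))
  have : (t, t + 1) ∈ inversions v := ⟨by simp, hlt⟩
  simp [h] at this

lemma FinSupp.eq_one_of_ell_eq_zero (hv : FinSupp v) (h : ell v = 0) : v = 1 := by
  obtain ⟨N, hN⟩ := hv.exists_fixedFrom
  have hmono : ∀ t, 0 ≤ t → v t < v (t + 1) := fun t _ =>
    lt_succ_of_inversions_eq_empty ((Set.ncard_eq_zero hv.inversions_finite).mp h) t
  ext j
  have := le_apply_add_of_lt_succ hmono le_rfl j
  have := hN.apply_le_self_of_lt_succ hmono (Nat.zero_le j)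
  simp only [zero_add, Perm.coe_one, id_eq] at *
  omega

lemma longest_zero : longest 0 = 1 := by
  ext k
  simp [longest_apply]

lemma eraseZero_dominates {m : ℕ} (hdom : ∀ i < m + 1, m - i ≤ v i) (hk : v k = 0) :
    m ≤ k ∧ ∀ i < m, m - 1 - i ≤ eraseZero v k hk i := by
  have hmk : m ≤ k := by
    by_contra hlt
    have := hdom k (by omega)
    omega
  refine ⟨hmk, fun i hi => ?_⟩
  have := apply_succAbove_eq_eraseZero hk i
  rw [show succAbove k i = i by unfold succAbove; rw [if_pos (by omega)]] at this
  have := hdom i (by omega)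
  omega

lemma card_ltPairs_le_ell {m : ℕ} (hv : FinSupp v) (hdom : ∀ i < m, m - 1 - i ≤ v i) :
    #(ltPairs m) ≤ ell v := by
  induction m generalizing v with
  | zero => simp [ltPairs]
  | succ m ih =>
    have hk : v (v.symm 0) = 0 := v.apply_symm_apply 0
    obtain ⟨hmk, hdom'⟩ := eraseZero_dominates (by simpa using hdom) hk
    have := ih (hv.eraseZero hk) hdom'
    rw [card_ltPairs_succ, ell_eq_ell_eraseZero_add hv hk]
    omega

lemma eq_longest_of_ell_le {m : ℕ} (hv : FinSupp v) (hdom : ∀ i < m, m - 1 - i ≤ v i)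
    (hell : ell v ≤ #(ltPairs m)) : v = longest m := by
  induction m generalizing v with
  | zero =>
    rw [longest_zero]
    exact hv.eq_one_of_ell_eq_zero (by simpa [ltPairs] using hell)
  | succ m ih =>
    have hk : v (v.symm 0) = 0 := v.apply_symm_apply 0
    set k := v.symm 0
    obtain ⟨hmk, hdom'⟩ := eraseZero_dominates (by simpa using hdom) hk
    have hge := card_ltPairs_le_ell (hv.eraseZero hk) hdom'
    rw [card_ltPairs_succ, ell_eq_ell_eraseZero_add hv hk] at hell
    have hkm : k = m := by omega
    have hv' := ih (hv.eraseZero hk) hdom' (by omega)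
    ext j
    by_cases hj : j = k
    · rw [hj, hk, longest_apply, if_pos (by omega)]
      omega
    obtain ⟨i, rfl⟩ := exists_succAbove_eq hj
    rw [apply_succAbove_eq_eraseZero hk, hv', longest_apply, longest_apply]
    unfold succAbove
    split_ifs <;> omega

lemma exists_lt_apply_of_apply_lt_self {j : ℕ} (h : v j < j) : ∃ p < j, v j < v p := by
  by_contra! hall
  have := card_le_card_of_injOn v (s := range j) (t := range (v j))
    (fun p hp => by
      have hp := mem_range.mp hp
      exact mem_range.mpr ((hall p hp).lt_of_ne (v.injective.ne (by omega))))
    v.injective.injOn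
  simp only [card_range] at this
  omega

/-- Past `E` the permutation is increasing, so it moves a point `k` only downwards, and then every
`j ∈ [E, k]` is moved downwards too and is the larger end of an inversion. -/
lemma FinSupp.fixedFrom_of_descent_lt {E L : ℕ} (hv : FinSupp v)
    (hdesc : ∀ k, v (k + 1) < v k → k < E) (hl : ell v ≤ L) : FixedFrom v (E + L) := by
  obtain ⟨N, hN⟩ := hv.exists_fixedFrom
  have hmono : ∀ t, E ≤ t → v t < v (t + 1) := fun t ht =>
    (le_of_not_gt fun h => by have := hdesc t h; omega).lt_of_ne (v.injective.ne (by omega))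
  intro k hk
  by_contra hne
  have hvk : v k < k := (hN.apply_le_self_of_lt_succ hmono (by omega)).lt_of_ne hne
  have hsub : Set.Icc E k ⊆ Prod.snd '' inversions v := fun j ⟨hEj, hjk⟩ => by
    have := le_apply_add_of_lt_succ hmono hEj (k - j)
    rw [Nat.add_sub_cancel' hjk] at this
    obtain ⟨p, hpj, hp⟩ := exists_lt_apply_of_apply_lt_self (v := v) (j := j) (by omega)
    exact ⟨(p, j), ⟨hpj, hp⟩, rfl⟩
  have := (Set.ncard_le_ncard hsub (hv.inversions_finite.image _)).trans
    (Set.ncard_image_le hv.inversions_finite)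
  rw [← coe_Icc, Set.ncard_coe_finset, Nat.card_Icc, ← ell_eq_ncard_inversions] at this
  omega

lemma finite_setOf_descent_lt_ell_le (E L : ℕ) :
    {v : Perm ℕ | FinSupp v ∧ (∀ k, v (k + 1) < v k → k < E) ∧ ell v ≤ L}.Finite := by
  have hfix : ∀ v ∈ {v : Perm ℕ | FinSupp v ∧ (∀ k, v (k + 1) < v k → k < E) ∧ ell v ≤ L},
      FixedFrom v (E + L) := fun v hv => hv.1.fixedFrom_of_descent_lt hv.2.1 hv.2.2
  refine Set.Finite.of_finite_image (f := fun v (q : Fin (E + L)) => v q)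
    ((Set.Finite.pi fun _ => Set.finite_Iio (E + L)).subset ?_) ?_
  · rintro _ ⟨v, hv, rfl⟩ q -
    exact (hfix v hv).apply_lt q.2
  · intro v hv w hw h
    ext q
    by_cases hq : q < E + L
    · exact congrFun h ⟨q, hq⟩
    · rw [hfix v hv q (by omega), hfix w hw q (by omega)]

end

namespace MvPolynomial

variable {σ R : Type*}

lemma homogeneousComponent_add_mul [CommSemiring R] {p : MvPolynomial σ R} {m : ℕ}
    (hp : p.IsHomogeneous m) (k : ℕ) (q : MvPolynomial σ R) :
    homogeneousComponent (m + k) (p * q) = p * homogeneousComponent k q := by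
  conv_lhs => rw [← sum_homogeneousComponent q, Finset.mul_sum, map_sum]
  simp_rw [homogeneousComponent_of_mem (hp.mul (homogeneousComponent_isHomogeneous _ q)),
    add_right_inj, Finset.sum_ite_eq]
  split_ifs with hk
  · rfl
  · rw [homogeneousComponent_eq_zero k q (by simpa using hk), mul_zero]

lemma IsHomogeneous.of_mul_left [CommRing R] [IsDomain R] {p q : MvPolynomial σ R} {m d : ℕ}
    (hp : p.IsHomogeneous m) (hp0 : p ≠ 0) (hpq : (p * q).IsHomogeneous (m + d)) :
    q.IsHomogeneous d := by
  intro b hb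
  change (Finsupp.weight fun _ => 1) b = d
  rw [← Finsupp.degree_eq_weight_one]
  by_contra hbd
  have hcomp : homogeneousComponent b.degree q ≠ 0 := fun h0 => by
    have := congrArg (coeff b) h0
    rw [coeff_homogeneousComponent, if_pos rfl, coeff_zero] at this
    exact hb this
  apply mul_ne_zero hp0 hcomp
  rw [← homogeneousComponent_add_mul hp, homogeneousComponent_of_mem hpq, if_neg (by omega)]

end MvPolynomial

open MvPolynomial

noncomputable def specializeX (v : Perm ℕ) : MvPolynomial (ℕ ⊕ ℕ) ℤ →ₐ[ℤ] MvPolynomial ℕ ℤ :=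
  rename (Sum.elim v id)

@[simp]
lemma specializeX_X_inl (v : Perm ℕ) (a : ℕ) : specializeX v (X (Sum.inl a)) = X (v a) :=
  rename_X _ _

@[simp]
lemma specializeX_X_inr (v : Perm ℕ) (b : ℕ) : specializeX v (X (Sum.inr b)) = X b :=
  rename_X _ _

lemma specializeX_sX (v : Perm ℕ) (i : ℕ) (f : MvPolynomial (ℕ ⊕ ℕ) ℤ) :
    specializeX v (sX i f) = specializeX (v * swap i (i + 1)) f := by
  simp only [specializeX, sX, rename_rename]
  congr 2
  funext x
  cases x <;> rfl

lemma X_sub_X_ne_zero {σ : Type*} {a b : σ} (h : a ≠ b) : (X a - X b : MvPolynomial σ ℤ) ≠ 0 :=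
  sub_ne_zero.mpr (X_injective.ne h)

structure IsTriangularAt (S : Perm ℕ → MvPolynomial (ℕ ⊕ ℕ) ℤ) (w : Perm ℕ) : Prop where
  isHomogeneous : (S w).IsHomogeneous (ell w)
  specializeX_eq_zero : ∀ v, FinSupp v → ell v ≤ ell w → v ≠ w → specializeX v (S w) = 0
  specializeX_self_ne_zero : specializeX w (S w) ≠ 0

namespace IsSchubertFamily

variable {S : Perm ℕ → MvPolynomial (ℕ ⊕ ℕ) ℤ}

lemma specializeX_longest (hS : IsSchubertFamily S) (m : ℕ) (v : Perm ℕ) :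
    specializeX v (S (longest m)) = ∏ i ∈ range m, ∏ j ∈ range m,
      if i + j + 2 ≤ m then (X (v i) - X j : MvPolynomial ℕ ℤ) else 1 := by
  simp only [hS.1 m, map_prod, apply_ite, map_sub, specializeX_X_inl, specializeX_X_inr, map_one]

lemma isTriangularAt_longest (hS : IsSchubertFamily S) (m : ℕ) : IsTriangularAt S (longest m) where
  isHomogeneous := by
    rw [hS.1 m, ell_longest, ← sum_ite_add_add_two_le]
    refine IsHomogeneous.prod _ _ _ fun i _ => IsHomogeneous.prod _ _ _ fun j _ => ?_
    split_ifs
    · exact (isHomogeneous_X _ _).sub (isHomogeneous_X _ _)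
    · exact isHomogeneous_one _ _
  specializeX_eq_zero v hv hell hne := by
    by_contra h0
    refine hne (eq_longest_of_ell_le hv (fun i hi => ?_) (ell_longest m ▸ hell))
    by_contra! hlt
    apply h0
    rw [specializeX_longest hS]
    refine prod_eq_zero (mem_range.mpr hi) (prod_eq_zero (mem_range.mpr (by omega : v i < m)) ?_)
    rw [if_pos (by omega), sub_self]
  specializeX_self_ne_zero := by
    rw [specializeX_longest hS]
    refine prod_ne_zero_iff.mpr fun i hi => prod_ne_zero_iff.mpr fun j hj => ?_
    rw [mem_range] at hi hj
    split_ifs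
    · exact X_sub_X_ne_zero (by rw [longest_apply, if_pos hi]; omega)
    · exact one_ne_zero

lemma isTriangularAt_mul_swap (hS : IsSchubertFamily S) {W : Perm ℕ} {i : ℕ} (hW : FinSupp W)
    (hdesc : W (i + 1) < W i) (hG : IsTriangularAt S W) :
    IsTriangularAt S (W * swap i (i + 1)) := by
  set w := W * swap i (i + 1)
  have hws : w * swap i (i + 1) = W := by simp [w, mul_assoc]
  have hlen : ell W = ell w + 1 := ell_mul_swap_of_gt hW hdesc
  have hrec := (hS.2.1 W hW i).1 hdesc
  have key : ∀ v : Perm ℕ, (X (v i) - X (v (i + 1))) * specializeX v (S w) =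
      specializeX v (S W) - specializeX (v * swap i (i + 1)) (S W) := fun v => by
    simpa [specializeX_sX] using congrArg (specializeX v) hrec
  have hX : ∀ v : Perm ℕ, (X (v i) - X (v (i + 1)) : MvPolynomial ℕ ℤ) ≠ 0 := fun v =>
    X_sub_X_ne_zero (v.injective.ne (by omega))
  refine ⟨?_, fun v hv hle hne => ?_, fun h0 => ?_⟩
  · refine ((isHomogeneous_X _ _).sub (isHomogeneous_X _ _)).of_mul_left
      (X_sub_X_ne_zero (a := Sum.inl i) (b := Sum.inl (i + 1)) (by simp)) ?_
    rw [hrec, add_comm, ← hlen]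
    exact hG.1.sub hG.1.rename_isHomogeneous
  · have h1 : specializeX v (S W) = 0 :=
      hG.2 v hv (by omega) (by rintro rfl; omega)
    have h2 : specializeX (v * swap i (i + 1)) (S W) = 0 :=
      hG.2 _ (hv.mul_swap i) (by have := ell_mul_swap_le hv i; omega)
        (fun h => hne (by rw [show w = W * swap i (i + 1) from rfl, ← h, mul_assoc, swap_mul_self,
          mul_one]))
    have := key v
    rw [h1, h2, sub_zero] at this
    exact (mul_eq_zero.mp this).resolve_left (hX v)
  · have h1 : specializeX w (S W) = 0 :=
      hG.2 w (hW.mul_swap i) (by omega) (fun h => by rw [h] at hlen; omega)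
    have := key w
    rw [h0, mul_zero, h1, hws, zero_sub, eq_comm, neg_eq_zero] at this
    exact hG.3 this

theorem isTriangularAt (hS : IsSchubertFamily S) {w : Perm ℕ} (hw : FinSupp w) :
    IsTriangularAt S w := by
  obtain ⟨N, hN⟩ := hw.exists_fixedFrom
  refine hN.induction_longest (hS.isTriangularAt_longest N) (fun w i hw _ hasc hG => ?_)
  have hdesc : (w * swap i (i + 1)) (i + 1) < (w * swap i (i + 1)) i := by simpa using hasc
  simpa [mul_assoc] using hS.isTriangularAt_mul_swap (hw.finSupp.mul_swap i) hdesc hG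

end IsSchubertFamily

section Strands

variable (e : ℕ → ℕ) (u : ℕ → Perm ℕ)

lemma startDot_fst_le (c q : ℕ) : (startDot e u c q).1 ≤ c := by
  induction c generalizing q with
  | zero => exact le_rfl
  | succ c ih =>
    rw [startDot]
    split_ifs
    · exact (ih _).trans c.le_succ
    · exact le_rfl

lemma startDot_injective (c : ℕ) : Function.Injective (startDot e u c) := by
  induction c with
  | zero => exact fun a b h => (Prod.ext_iff.mp h).2
  | succ c ih =>
    intro a b h
    simp only [startDot] at h
    have hfst := congrArg Prod.fst h
    split_ifs at h hfst with ha hb hb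
    · exact (u (c + 1)).injective (ih h)
    · exact absurd hfst (by have := startDot_fst_le e u c (u (c + 1) a); omega)
    · exact absurd hfst (by have := startDot_fst_le e u c (u (c + 1) b); omega)
    · exact (Prod.ext_iff.mp h).2

/-- The strand of `u` through dot `p` of column `c`, for `p < e c`; the remaining labels
`(c + 1, _)` are used by no such strand and make the map injective. -/
def strandLabel (c : ℕ) (p : ℕ) : ℕ × ℕ :=
  if p < e c then startDot e u c p else (c + 1, (u (c + 1))⁻¹ p)

lemma strandLabel_injective (c : ℕ) : Function.Injective (strandLabel e u c) := by
  intro a b h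
  unfold strandLabel at h
  have hfst := congrArg Prod.fst h
  split_ifs at h hfst with ha hb hb
  · exact startDot_injective e u c h
  · exact absurd hfst (by have := startDot_fst_le e u c a; omega)
  · exact absurd hfst (by have := startDot_fst_le e u c b; omega)
  · exact (u (c + 1))⁻¹.injective (Prod.ext_iff.mp h).2

lemma strandLabel_apply (c a : ℕ) : strandLabel e u c (u (c + 1) a) = startDot e u (c + 1) a := by
  rw [startDot, strandLabel]
  split_ifs
  · rfl
  · simp

end Strands

lemma MvPolynomial.rename_congr_of_vars {σ τ R : Type*} [CommSemiring R] {f g : σ → τ}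
    {p : MvPolynomial σ R} (h : ∀ v ∈ p.vars, f v = g v) : rename f p = rename g p :=
  hom_congr_vars (f₁ := (rename f).toRingHom) (f₂ := (rename g).toRingHom) (by ext; simp)
    (fun v hv _ => by simp [h v hv]) rfl

section LaceDiagrams

variable {n : ℕ} {e : ℕ → ℕ} {S : Perm ℕ → MvPolynomial (ℕ ⊕ ℕ) ℤ} {w u : ℕ → Perm ℕ}

/-- The strand of `u` through dot `(i, a)` is the one through dot `(i - 1, u_i a)`. -/
lemma phiMap_rename_S (hS : IsSchubertFamily S) (hw : IsLace n e w) {i : ℕ} (h1 : 1 ≤ i)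
    (h2 : i ≤ n) :
    phiMap e u (rename (Sum.elim (fun a => (i, a)) fun b => (i - 1, b)) (S (w i))) =
      rename (strandLabel e u (i - 1)) (specializeX (u i) (S (w i))) := by
  obtain ⟨c, rfl⟩ : ∃ c, i = c + 1 := ⟨i - 1, by omega⟩
  obtain ⟨hfin, hdesc, hdesc'⟩ := hw.2 (c + 1) h1 h2
  simp only [phiMap, specializeX, rename_rename, Nat.add_sub_cancel]
  refine rename_congr_of_vars fun v hv => ?_
  rcases hS.2.2 _ hfin (e (c + 1)) (e c) (fun t ht hd => by have := hdesc t hd; omega)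
    (fun t ht hd => by have := hdesc' t hd; rw [Nat.add_sub_cancel] at this; omega) v hv with
    ⟨a, -, rfl⟩ | ⟨b, hb, rfl⟩
  · exact (strandLabel_apply e u c a).symm
  · simp [strandLabel, hb]

lemma phiMap_Sprod (hS : IsSchubertFamily S) (hw : IsLace n e w) :
    phiMap e u (Sprod n S w) =
      ∏ i ∈ Icc 1 n, rename (strandLabel e u (i - 1)) (specializeX (u i) (S (w i))) := by
  rw [Sprod, map_prod]
  exact prod_congr rfl fun i hi => phiMap_rename_S hS hw (mem_Icc.mp hi).1 (mem_Icc.mp hi).2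

lemma IsLace.finSupp (hw : IsLace n e w) {i : ℕ} (hi : i ∈ Icc 1 n) : FinSupp (w i) :=
  (hw.2 i (mem_Icc.mp hi).1 (mem_Icc.mp hi).2).1

lemma IsLace.ext (hw : IsLace n e w) (hu : IsLace n e u) (h : ∀ i ∈ Icc 1 n, w i = u i) :
    w = u := by
  funext i
  by_cases hi : i ∈ Icc 1 n
  · exact h i hi
  · rw [mem_Icc] at hi
    rw [hw.1 i (by omega), hu.1 i (by omega)]

lemma codim_rank_eq {r : ℕ → ℕ → ℕ} (hr : RankEq n e w r) : codim n (rank e w) = codim n r := by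
  refine sum_congr rfl fun i hi => sum_congr rfl fun j hj => ?_
  rw [mem_range] at hi hj
  split_ifs
  · rw [hr i (j - 1) (by omega) (by omega), hr i j (by omega) (by omega),
      hr (i + 1) j (by omega) (by omega)]
  · rfl

lemma IsMinimal.diagLength_eq {r : ℕ → ℕ → ℕ} (hw : IsMinimal n e w) (hr : RankEq n e w r) :
    diagLength n w = codim n r :=
  hw.2.trans (codim_rank_eq hr)

lemma finite_setOf_isMinimal_rankEq (n : ℕ) (e : ℕ → ℕ) (r : ℕ → ℕ → ℕ) :
    {w | IsMinimal n e w ∧ RankEq n e w r}.Finite := by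
  refine Set.Finite.of_finite_image (f := fun w (i : Fin n) => w (i.1 + 1))
    ((Set.Finite.pi fun (i : Fin n) =>
      finite_setOf_descent_lt_ell_le (e (i.1 + 1)) (codim n r)).subset ?_) ?_
  · rintro _ ⟨w, ⟨hw, hr⟩, rfl⟩ i -
    obtain ⟨hfin, hdesc, -⟩ := hw.1.2 (i.1 + 1) (by omega) (by omega)
    refine ⟨hfin, hdesc, ?_⟩
    rw [← hw.diagLength_eq hr]
    exact single_le_sum (f := fun i => ell (w i)) (fun _ _ => Nat.zero_le _)
      (mem_Icc.mpr ⟨by omega, by omega⟩)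
  · rintro w ⟨hw, -⟩ u ⟨hu, -⟩ h
    refine hw.1.ext hu.1 fun i hi => ?_
    obtain ⟨h1, h2⟩ := mem_Icc.mp hi
    simpa [Nat.sub_add_cancel h1] using congrFun h ⟨i - 1, by omega⟩

lemma Qpoly_eq_sum (n : ℕ) (e : ℕ → ℕ) (r : ℕ → ℕ → ℕ) :
    Qpoly n e r S = ∑ w ∈ (finite_setOf_isMinimal_rankEq n e r).toFinset, Sprod n S w :=
  finsum_mem_eq_finite_toFinset_sum _ _

lemma isHomogeneous_Sprod (hS : IsSchubertFamily S) (hw : IsLace n e w) :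
    (Sprod n S w).IsHomogeneous (diagLength n w) :=
  IsHomogeneous.prod _ _ _ fun _ hi =>
    (hS.isTriangularAt (hw.finSupp hi)).isHomogeneous.rename_isHomogeneous

lemma phiMap_Sprod_eq_zero (hS : IsSchubertFamily S) (hu : IsLace n e u) (hw : IsLace n e w)
    (hlen : diagLength n w = diagLength n u) (hne : w ≠ u) : phiMap e u (Sprod n S w) = 0 := by
  rw [phiMap_Sprod hS hw]
  by_contra hprod
  have hspec : ∀ i ∈ Icc 1 n, specializeX (u i) (S (w i)) ≠ 0 := fun i hi h0 =>
    hprod (prod_eq_zero hi (by rw [h0, map_zero]))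
  have hvanish : ∀ i ∈ Icc 1 n, ell (u i) ≤ ell (w i) → u i ≠ w i →
      specializeX (u i) (S (w i)) = 0 := fun i hi =>
    (hS.isTriangularAt (hw.finSupp hi)).specializeX_eq_zero _ (hu.finSupp hi)
  have hle : ∀ i ∈ Icc 1 n, ell (w i) ≤ ell (u i) := fun i hi =>
    le_of_not_gt fun hlt => hspec i hi (hvanish i hi hlt.le fun h => by rw [h] at hlt; omega)
  have heq := (sum_eq_sum_iff_of_le hle).mp hlen
  exact hne (hw.ext hu fun i hi => by_contra fun h => hspec i hi (hvanish i hi (heq i hi).ge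
    (Ne.symm h)))

lemma phiMap_Sprod_self_ne_zero (hS : IsSchubertFamily S) (hu : IsLace n e u) :
    phiMap e u (Sprod n S u) ≠ 0 := by
  rw [phiMap_Sprod hS hu, prod_ne_zero_iff]
  intro i hi h0
  refine (hS.isTriangularAt (hu.finSupp hi)).specializeX_self_ne_zero
    (rename_injective _ (strandLabel_injective e u (i - 1)) ?_)
  rw [h0, map_zero]

end LaceDiagrams

theorem phi_Qpoly_diagonal_general (n : ℕ) (e : ℕ → ℕ) (r : ℕ → ℕ → ℕ)
    (S : Equiv.Perm ℕ → MvPolynomial (ℕ ⊕ ℕ) ℤ) (hS : IsSchubertFamily S)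
    (u : ℕ → Equiv.Perm ℕ) (hu : IsMinimal n e u) (hur : RankEq n e u r) :
    (∀ w, IsMinimal n e w → RankEq n e w r → w ≠ u → phiMap e u (Sprod n S w) = 0) ∧
    phiMap e u (Qpoly n e r S) = phiMap e u (Sprod n S u) ∧
    phiMap e u (Sprod n S u) ≠ 0 ∧
    (phiMap e u (Sprod n S u)).IsHomogeneous (codim n r) := by
  have hzero : ∀ w, IsMinimal n e w → RankEq n e w r → w ≠ u →
      phiMap e u (Sprod n S w) = 0 := fun w hw hwr =>
    phiMap_Sprod_eq_zero hS hu.1 hw.1 (by rw [hw.diagLength_eq hwr, hu.diagLength_eq hur])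
  refine ⟨hzero, ?_, phiMap_Sprod_self_ne_zero hS hu.1, ?_⟩
  · rw [Qpoly_eq_sum, map_sum]
    refine sum_eq_single_of_mem u (by simpa using ⟨hu, hur⟩) fun w hw hne => ?_
    rw [Set.Finite.mem_toFinset] at hw
    exact hzero w hw.1 hw.2 hne
  · rw [← hu.diagLength_eq hur]
    exact (isHomogeneous_Sprod hS hu.1).rename_isHomogeneous

/-- for a minimal lace diagram `u` with rank conditions `r`,
`φ_u(S(w)) = 0` for every other minimal lace diagram `w` with rank conditions
`r`; consequently `φ_u(Q_r) = φ_u(S(u))`, which is a nonzero polynomial in the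
strand variables, homogeneous of degree `d r`. -/
theorem phi_Qpoly_diagonal (n : ℕ) (hn : 1 ≤ n) (e : ℕ → ℕ) (r : ℕ → ℕ → ℕ)
    (S : Equiv.Perm ℕ → MvPolynomial (ℕ ⊕ ℕ) ℤ) (hS : IsSchubertFamily S)
    (u : ℕ → Equiv.Perm ℕ) (hu : IsMinimal n e u) (hur : RankEq n e u r) :
    (∀ w, IsMinimal n e w → RankEq n e w r → w ≠ u → phiMap e u (Sprod n S w) = 0) ∧
    phiMap e u (Qpoly n e r S) = phiMap e u (Sprod n S u) ∧
    phiMap e u (Sprod n S u) ≠ 0 ∧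
    (phiMap e u (Sprod n S u)).IsHomogeneous (codim n r) :=
  phi_Qpoly_diagonal_general n e r S hS u hu hur
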